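/- Let n ≥ 1 and let G be any connected simple graph on Fin n. Then the real vector space 𝓜(G) of additive no-arbitrage matrices over G has dimension n - 1. -/
import Mathlib


/-- The sum of `E` over the consecutive edge steps of a walk `w` in `G`:
`∑_{i < length w} E v_i v_{i+1}`. -/
def walkSum {V : Type*} {G : SimpleGraph V} (E : V → V → ℝ) {u v : V} (w : G.Walk u v) : ℝ :=
  ∑ i ∈ Finset.range w.length, E (w.getVert i) (w.getVert (i + 1))

/-- `E` is an additive no-arbitrage matrix over `G`: it vanishes on non-adjacent pairs and
its sum over the steps of every closed walk is zero. -/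
def IsNoArbitrage {V : Type*} (G : SimpleGraph V) (E : V → V → ℝ) : Prop :=
  (∀ i j, ¬ G.Adj i j → E i j = 0) ∧ ∀ (v : V) (w : G.Walk v v), walkSum E w = 0


/-- `𝓜(G)`: the subspace of additive no-arbitrage matrices over `G`. -/
def noArbSubmodule {V : Type*} (G : SimpleGraph V) : Submodule ℝ (V → V → ℝ) where
  carrier := {E | IsNoArbitrage G E}
  zero_mem' := ⟨fun _ _ _ => rfl, fun v w => by simp [walkSum]⟩
  add_mem' := by
    rintro E E' ⟨hE0, hEw⟩ ⟨hE'0, hE'w⟩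
    refine ⟨fun i j h => by simp [Pi.add_apply, hE0 i j h, hE'0 i j h], fun v w => ?_⟩
    have : walkSum (E + E') w = walkSum E w + walkSum E' w := by
      simp [walkSum, Finset.sum_add_distrib]
    rw [this, hEw v w, hE'w v w, add_zero]
  smul_mem' := by
    rintro c E ⟨hE0, hEw⟩
    refine ⟨fun i j h => by simp [Pi.smul_apply, hE0 i j h], fun v w => ?_⟩
    have : walkSum (c • E) w = c * walkSum E w := by
      simp [walkSum, Finset.mul_sum]
    rw [this, hEw v w, mul_zero]


open SimpleGraph

section lemmas
variable {V : Type*} {G : SimpleGraph V}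

lemma walkSum_nil (E : V → V → ℝ) (u : V) :
    walkSum E (Walk.nil : G.Walk u u) = 0 := by simp [walkSum]

lemma walkSum_cons (E : V → V → ℝ) {u v w : V} (h : G.Adj u v) (p : G.Walk v w) :
    walkSum E (Walk.cons h p) = walkSum E p + E u v := by
  unfold walkSum
  rw [Walk.length_cons, Finset.sum_range_succ']
  simp [Walk.getVert_cons_succ]

lemma walkSum_append (E : V → V → ℝ) {u v w : V} (p : G.Walk u v) (q : G.Walk v w) :
    walkSum E (p.append q) = walkSum E p + walkSum E q := by
  induction p with
  | nil => simp [walkSum_nil]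
  | cons h p ih =>
      rw [Walk.cons_append, walkSum_cons, walkSum_cons, ih]; ring

lemma walkSum_reverse (E : V → V → ℝ) (hE : ∀ i j, E j i = -E i j)
    {u v : V} (p : G.Walk u v) :
    walkSum E p.reverse = -walkSum E p := by
  induction p with
  | nil => simp [walkSum_nil]
  | cons h p ih =>
      rw [Walk.reverse_cons, walkSum_append, walkSum_cons, walkSum_cons, ih,
        walkSum_nil, hE]
      ring

end lemmas

/-- The space of additive no-arbitrage matrices over any connected graph on `Fin n`
(`n ≥ 1`) has dimension `n - 1`. -/
theorem finrank_no_arbitrage_connected (n : ℕ) (hn : 1 ≤ n) (G : SimpleGraph (Fin n))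
    (hG : G.Connected) :
    Module.finrank ℝ (noArbSubmodule G) = n - 1 := by
  classical
  -- potential map
  let Φ : (Fin n → ℝ) →ₗ[ℝ] (Fin n → Fin n → ℝ) :=
    { toFun := fun f i j => if G.Adj i j then f j - f i else 0
      map_add' := by
        intro f g; funext i j; by_cases h : G.Adj i j <;> simp [h] <;> ring
      map_smul' := by
        intro c f; funext i j; by_cases h : G.Adj i j <;> simp [h] <;> ring }
  have hΦ_apply : ∀ (f : Fin n → ℝ) i j, Φ f i j = if G.Adj i j then f j - f i else 0 :=
    fun _ _ _ => rfl
  -- telescoping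
  have tele : ∀ (f : Fin n → ℝ) {u v : Fin n} (w : G.Walk u v),
      walkSum (Φ f) w = f v - f u := by
    intro f u v w
    induction w with
    | nil => simp [walkSum_nil]
    | cons h p ih =>
        rw [walkSum_cons, ih, hΦ_apply, if_pos h]; ring
  -- range Φ = noArbSubmodule G
  have hrange : LinearMap.range Φ = noArbSubmodule G := by
    apply le_antisymm
    · rintro E ⟨f, rfl⟩
      refine ⟨fun i j h => by simp [hΦ_apply, h], fun v w => by rw [tele]; ring⟩
    · rintro E ⟨hE0, hEw⟩
      have hanti : ∀ i j, E j i = -E i j := by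
        intro i j
        by_cases h : G.Adj i j
        · have := hEw i (Walk.cons h (Walk.cons h.symm Walk.nil))
          rw [walkSum_cons, walkSum_cons, walkSum_nil] at this
          linarith
        · rw [hE0 i j h, hE0 j i (fun h' => h h'.symm)]; simp
      have z : Fin n := ⟨0, hn⟩
      have hreach : ∀ v : Fin n, Nonempty (G.Walk z v) := fun v => (hG.preconnected z v)
      let f : Fin n → ℝ := fun v => walkSum E (hreach v).some
      refine ⟨f, ?_⟩
      funext i j
      rw [hΦ_apply]
      by_cases h : G.Adj i j
      · rw [if_pos h]
        have hc := hEw z ((((hreach i).some).append (Walk.cons h Walk.nil)).append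
          ((hreach j).some).reverse)
        rw [walkSum_append, walkSum_append, walkSum_cons, walkSum_nil,
          walkSum_reverse E hanti] at hc
        show f j - f i = E i j
        simp only [f] at hc ⊢
        linarith
      · rw [if_neg h, hE0 i j h]
  -- kernel = constants
  let C : ℝ →ₗ[ℝ] (Fin n → ℝ) :=
    { toFun := fun c _ => c
      map_add' := by intro a b; rfl
      map_smul' := by intro a b; rfl }
  have hker : LinearMap.ker Φ = LinearMap.range C := by
    apply le_antisymm
    · intro f hf
      have hf' : ∀ i j, G.Adj i j → f i = f j := by
        intro i j h
        have := congrFun (congrFun (LinearMap.mem_ker.mp hf) i) j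
        rw [hΦ_apply, if_pos h, Pi.zero_apply, Pi.zero_apply] at this
        linarith [this]
      have hconst : ∀ u v : Fin n, f u = f v := by
        intro u v
        obtain ⟨w⟩ := hG.preconnected u v
        induction w with
        | nil => rfl
        | cons h p ih => rw [hf' _ _ h]; exact ih
      exact ⟨f ⟨0, hn⟩, funext fun v => (hconst v ⟨0, hn⟩).symm⟩
    · rintro f ⟨c, rfl⟩
      apply LinearMap.mem_ker.mpr
      funext i j
      rw [hΦ_apply]
      by_cases h : G.Adj i j <;> simp [h, C]
  have hCinj : Function.Injective C := by
    intro a b hab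
    exact congrFun hab ⟨0, hn⟩
  have h1 : Module.finrank ℝ (LinearMap.ker Φ) = 1 := by
    rw [hker, LinearMap.finrank_range_of_inj hCinj, Module.finrank_self]
  have h2 := LinearMap.finrank_range_add_finrank_ker Φ
  rw [hrange, h1, Module.finrank_pi] at h2
  simp at h2
  omega
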